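/- arXiv:cs/0302030 — 3 statements merged into one kernel-verified Lean document; each statement's English description precedes it below -/
import Mathlib

section
/- Every simple graph with n vertices and maximum degree 3 has at most O(2^{3n/8}) Hamiltonian cycles; more precisely, there is a constant c such that for all n, any simple n-vertex graph of maximum degree 3 has at most c·2^{3n/8} Hamiltonian cycles. -/
/-- `IsHamCycleSet G C` : `C` is the edge set of some Hamiltonian cycle of `G`. -/
def IsHamCycleSet {V : Type*} [DecidableEq V] (G : SimpleGraph V) (C : Set (Sym2 V)) : Prop :=
  ∃ (v : V) (p : G.Walk v v), p.IsHamiltonianCycle ∧ C = {e | e ∈ p.edges}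

/-!
Count the Hamiltonian cycles by a branching search. A node `(F, X)` of the search consists of
forced edges `F` and excluded edges `X`, and its cycles are those through `F` avoiding `X`. Every
vertex has exactly two cycle edges among its at most three edges, so a vertex with two forced
edges, or with at most two non-excluded ones, decides all its edges (a forced move). Once no
forced move is left, either no undecided edge touches `F`, and then `F` is the whole cycle, or some
vertex `u` has one forced edge and two undecided edges `s(u, a)`, `s(u, w)`. Branching on which of
the two a cycle uses and propagating the degree constraint at `a`, `w` (and at the far end of the
third edge at `a`) decides `(4, 4)` or `(3, 6)` undecided edges in the two branches. With
`ρ = 2 ^ (1/4)` both patterns satisfy `ρ ^ (-g₁) + ρ ^ (-g₂) ≤ 1`, so a node with `k` undecided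
edges and `F ≠ ∅` has at most `ρ ^ k` cycles. A graph of maximum degree `3` has at most `3n/2`
edges, and one initial branch at a vertex makes `F` nonempty, giving `2 · 2 ^ (3n/8)`.
-/

open Finset SimpleGraph

lemma SimpleGraph.two_mul_card_edgeFinset_le {V : Type*} [Fintype V] {G : SimpleGraph V}
    [DecidableRel G.Adj] {d : ℕ} (hdeg : ∀ v, G.degree v ≤ d) :
    2 * #G.edgeFinset ≤ d * Fintype.card V := by
  rw [← sum_degrees_eq_twice_card_edges]
  simpa [mul_comm] using sum_le_sum fun v (_ : v ∈ univ) ↦ hdeg v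

namespace IsHamCycleSet

variable {V : Type*} [DecidableEq V] {G : SimpleGraph V} {C : Set (Sym2 V)}

lemma subset_edgeSet (hC : IsHamCycleSet G C) : C ⊆ G.edgeSet := by
  obtain ⟨_, p, -, rfl⟩ := hC
  exact fun _ h ↦ p.edges_subset_edgeSet h

lemma ncard_inter_incidenceSet (hC : IsHamCycleSet G C) (v : V) :
    (C ∩ G.incidenceSet v).ncard = 2 := by
  obtain ⟨_, p, hp, rfl⟩ := hC
  have hadj (w : V) : p.toSubgraph.Adj v w ↔ s(v, w) ∈ p.edges := by
    rw [← Subgraph.mem_edgeSet, Walk.mem_edges_toSubgraph]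
  have : {e | e ∈ p.edges} ∩ G.incidenceSet v = (s(v, ·)) '' p.toSubgraph.neighborSet v := by
    ext e
    constructor
    · rintro ⟨he, -, hv⟩
      refine ⟨Sym2.Mem.other hv, ?_, Sym2.other_spec hv⟩
      rwa [Subgraph.mem_neighborSet, hadj, Sym2.other_spec hv]
    · rintro ⟨w, hw, rfl⟩
      have hw : s(v, w) ∈ p.edges := (hadj w).1 hw
      exact ⟨hw, p.edges_subset_edgeSet hw, Sym2.mem_mk_left v w⟩
  rw [this, Set.ncard_image_of_injective _ (fun _ _ ↦ Sym2.congr_right.mp),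
    hp.isCycle.ncard_neighborSet_toSubgraph_eq_two (hp.mem_support v)]

lemma subset_of_forall_mem {F : Set (Sym2 V)} (hC : IsHamCycleSet G C) (hF : F.Nonempty)
    (hCF : ∀ e ∈ C, ∀ x ∈ e, (∃ f ∈ F, x ∈ f) → e ∈ F) : C ⊆ F := by
  obtain ⟨u, p, hp, rfl⟩ := hC
  set T : Set V := {x | ∃ f ∈ F, x ∈ f}
  have step {x y : V} (q : G.Walk x y) (hq : ∀ e ∈ q.edges, e ∈ p.edges) (hx : x ∈ T) :
      y ∈ T := by
    induction q with
    | nil => exact hx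
    | cons h q ih =>
      simp only [Walk.edges_cons, List.mem_cons, forall_eq_or_imp] at hq
      exact ih hq.2 ⟨_, hCF _ hq.1 _ (Sym2.mem_mk_left _ _) hx, Sym2.mem_mk_right _ _⟩
  obtain ⟨f, hf⟩ := hF
  obtain ⟨t, ht⟩ : ∃ t, t ∈ f := ⟨_, Sym2.out_fst_mem f⟩
  have hall (y : V) : y ∈ T := by
    let q := (p.dropUntil t (hp.mem_support t)).append (p.takeUntil y (hp.mem_support y))
    refine step q (fun e he ↦ ?_) ⟨f, hf, ht⟩
    rcases List.mem_append.mp (Walk.edges_append _ _ ▸ he) with he | he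
    · exact p.edges_dropUntil_subset_edges _ he
    · exact p.edges_takeUntil_subset_edges _ he
  intro e he
  obtain ⟨x, hx⟩ : ∃ x, x ∈ e := ⟨_, Sym2.out_fst_mem e⟩
  exact hCF e he x hx (hall x)

end IsHamCycleSet

namespace HamCycleCount

section TwoOfThree

variable {α : Type*} [DecidableEq α] {C I : Finset α}

lemma sdiff_subset_of_card_inter_eq_two {X : Finset α} (hC : #(C ∩ I) = 2)
    (hCX : Disjoint C X) (hI : #(I \ X) ≤ 2) : I \ X ⊆ C := by
  have hsub : C ∩ I ⊆ I \ X := fun e he ↦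
    mem_sdiff.2 ⟨(mem_inter.1 he).2, disjoint_left.1 hCX (mem_inter.1 he).1⟩
  rw [← eq_of_subset_of_card_le hsub (hI.trans hC.ge)]
  exact inter_subset_left

lemma inter_subset_of_card_inter_eq_two {F : Finset α} (hC : #(C ∩ I) = 2) (hFC : F ⊆ C)
    (hF : 2 ≤ #(F ∩ I)) : C ∩ I ⊆ F := by
  rw [← eq_of_subset_of_card_le (inter_subset_inter_right hFC) (hC.le.trans hF)]
  exact inter_subset_left

lemma erase_subset_of_card_inter_eq_two {x : α} (hC : #(C ∩ I) = 2) (hI : #I ≤ 3) (hx : x ∈ I)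
    (hxC : x ∉ C) : I.erase x ⊆ C := by
  rw [← sdiff_singleton_eq_erase]
  refine sdiff_subset_of_card_inter_eq_two hC (disjoint_singleton_right.2 hxC) ?_
  rw [sdiff_singleton_eq_erase, card_erase_of_mem hx]
  omega

lemma mem_iff_notMem_of_card_inter_eq_two {f x y : α} (hC : #(C ∩ I) = 2) (hI : #I ≤ 3)
    (hf : f ∈ C) (hfI : f ∈ I) (hx : x ∈ I) (hy : y ∈ I) (hfx : f ≠ x) (hfy : f ≠ y)
    (hxy : x ≠ y) : x ∈ C ↔ y ∉ C := by
  refine ⟨fun hxC hyC ↦ ?_, fun hyC ↦ erase_subset_of_card_inter_eq_two hC hI hy hyC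
    (mem_erase.2 ⟨hxy, hx⟩)⟩
  have : ({f, x, y} : Finset α) ⊆ C ∩ I := by
    simp [insert_subset_iff, *]
  have := card_le_card this
  rw [card_insert_of_notMem (by simp [*]), card_pair hxy] at this
  omega

end TwoOfThree

noncomputable def ρ : ℝ := 2 ^ (4⁻¹ : ℝ)

lemma ρ_pow_four : ρ ^ 4 = 2 := by
  rw [ρ, ← Real.rpow_natCast, ← Real.rpow_mul (by norm_num)]
  norm_num

lemma one_le_ρ : 1 ≤ ρ := Real.one_le_rpow (by norm_num) (by norm_num)

lemma ρ_nonneg : 0 ≤ ρ := zero_le_one.trans one_le_ρ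

lemma ρ_pow_eq_rpow (m : ℕ) : ρ ^ m = 2 ^ ((m : ℝ) / 4) := by
  rw [ρ, ← Real.rpow_natCast, ← Real.rpow_mul (by norm_num), inv_mul_eq_div]

lemma pow_three_add_one_le_pow_six : ρ ^ 3 + 1 ≤ ρ ^ 6 := by
  have hsq : ρ ^ 2 * ρ ^ 2 = 2 := by rw [← pow_add, ρ_pow_four]
  have : 1.4 ≤ ρ ^ 2 := by nlinarith
  have : ρ ≤ 1.2 := by nlinarith [one_le_ρ]
  rw [show ρ ^ 6 = ρ ^ 4 * ρ ^ 2 by ring, show ρ ^ 3 = ρ ^ 2 * ρ by ring, ρ_pow_four]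
  nlinarith

lemma pow_add_pow_le_pow {k k₁ k₂ : ℕ}
    (h : (k₁ + 4 ≤ k ∧ k₂ + 4 ≤ k) ∨ (k₁ + 3 ≤ k ∧ k₂ + 6 ≤ k)) : ρ ^ k₁ + ρ ^ k₂ ≤ ρ ^ k := by
  have mono {m n : ℕ} (h : m ≤ n) : ρ ^ m ≤ ρ ^ n := pow_le_pow_right₀ one_le_ρ h
  rcases h with ⟨h₁, h₂⟩ | ⟨h₁, h₂⟩
  · calc ρ ^ k₁ + ρ ^ k₂ ≤ ρ ^ (k - 4) * 2 := by
          linarith [mono (show k₁ ≤ k - 4 by omega), mono (show k₂ ≤ k - 4 by omega)]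
      _ = ρ ^ k := by rw [← ρ_pow_four, pow_sub_mul_pow ρ (by omega)]
  · calc ρ ^ k₁ + ρ ^ k₂ ≤ ρ ^ (k - 6) * (ρ ^ 3 + 1) := by
          rw [mul_add, mul_one, ← pow_add]
          linarith [mono (show k₁ ≤ k - 6 + 3 by omega), mono (show k₂ ≤ k - 6 by omega)]
      _ ≤ ρ ^ (k - 6) * ρ ^ 6 :=
          mul_le_mul_of_nonneg_left pow_three_add_one_le_pow_six
            (pow_nonneg ρ_nonneg _)
      _ = ρ ^ k := pow_sub_mul_pow ρ (by omega)

variable {V : Type*} [DecidableEq V] {G : SimpleGraph V} {F X P Q C : Finset (Sym2 V)}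

variable (G) in
def hamCycles (F X : Finset (Sym2 V)) : Set (Finset (Sym2 V)) :=
  {C | IsHamCycleSet G C ∧ F ⊆ C ∧ Disjoint C X}

lemma ncard_setOf_isHamCycleSet [Fintype V] :
    {C : Set (Sym2 V) | IsHamCycleSet G C}.ncard = (hamCycles G ∅ ∅).ncard := by
  have : {C : Set (Sym2 V) | IsHamCycleSet G C} = (↑) '' hamCycles G ∅ ∅ := by
    ext C
    refine ⟨fun hC ↦ ⟨C.toFinite.toFinset, ?_, by simp⟩, fun ⟨C, hC, hCC⟩ ↦ hCC ▸ hC.1⟩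
    exact ⟨by simpa using hC, empty_subset _, disjoint_empty_right _⟩
  rw [this, Set.ncard_image_of_injective _ coe_injective]

lemma mem_hamCycles_union :
    C ∈ hamCycles G (F ∪ P) (X ∪ Q) ↔ C ∈ hamCycles G F X ∧ P ⊆ C ∧ Disjoint C Q := by
  simp only [hamCycles, Set.mem_ofPred_eq, union_subset_iff, disjoint_union_right]
  tauto

variable [Fintype V] [DecidableRel G.Adj] {e : Sym2 V} {u v a w z : V}

lemma mk_mem_incidenceFinset_right {x y : V} (h : G.Adj x y) : s(x, y) ∈ G.incidenceFinset y :=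
  (mem_incidenceFinset _ _ _).2 (G.mk'_mem_incidenceSet_right_iff.2 h)

variable (G) in
def undecided (F X : Finset (Sym2 V)) : Finset (Sym2 V) := G.edgeFinset \ (F ∪ X)

lemma mem_undecided : e ∈ undecided G F X ↔ e ∈ G.edgeSet ∧ e ∉ F ∧ e ∉ X := by
  simp [undecided]

lemma card_inter_incidenceFinset (hC : C ∈ hamCycles G F X) (v : V) :
    #(C ∩ G.incidenceFinset v) = 2 := by
  rw [← Set.ncard_coe_finset, coe_inter, coe_incidenceFinset]
  exact hC.1.ncard_inter_incidenceSet v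

lemma card_undecided_union_add (h : P ∪ Q ⊆ undecided G F X) :
    #(undecided G (F ∪ P) (X ∪ Q)) + #(P ∪ Q) = #(undecided G F X) := by
  have : undecided G (F ∪ P) (X ∪ Q) = undecided G F X \ (P ∪ Q) := by
    ext
    simp only [undecided, mem_sdiff, mem_union]
    tauto
  rw [this, card_sdiff_add_card_eq_card h]

variable (G) in
def HasBranch (F X : Finset (Sym2 V)) (p : Finset (Sym2 V) → Prop) (g : ℕ) : Prop :=
  ∃ P Q, P ∪ Q ⊆ undecided G F X ∧ g ≤ #(P ∪ Q) ∧
    ∀ C ∈ hamCycles G F X, p C → P ⊆ C ∧ Disjoint C Q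

variable (G) in
def CountBoundBelow (k : ℕ) : Prop :=
  ∀ F X : Finset (Sym2 V), F.Nonempty → #(undecided G F X) < k →
    ((hamCycles G F X).ncard : ℝ) ≤ ρ ^ #(undecided G F X)

lemma HasBranch.exists_ncard_le {p : Finset (Sym2 V) → Prop} {g : ℕ}
    (IH : CountBoundBelow G #(undecided G F X)) (hF : F.Nonempty) (h : HasBranch G F X p g)
    (hg : 0 < g) : ∃ k, k + g ≤ #(undecided G F X) ∧
      ((hamCycles G F X ∩ {C | p C}).ncard : ℝ) ≤ ρ ^ k := by
  obtain ⟨P, Q, hPQ, hgPQ, hchild⟩ := h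
  have hcard := card_undecided_union_add hPQ
  refine ⟨_, by omega, le_trans ?_ (IH (F ∪ P) (X ∪ Q) (hF.mono subset_union_left) (by omega))⟩
  refine Nat.cast_le.2 (Set.ncard_le_ncard (fun C ⟨hC, hpC⟩ ↦ ?_))
  exact mem_hamCycles_union.2 ⟨hC, hchild C hC hpC⟩

lemma ncard_le_of_hasBranch {p : Finset (Sym2 V) → Prop} {g : ℕ}
    (IH : CountBoundBelow G #(undecided G F X)) (hF : F.Nonempty)
    (hp : ∀ C ∈ hamCycles G F X, p C) (h : HasBranch G F X p g) (hg : 0 < g) :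
    ((hamCycles G F X).ncard : ℝ) ≤ ρ ^ #(undecided G F X) := by
  obtain ⟨k, hk, hbound⟩ := h.exists_ncard_le IH hF hg
  rw [Set.inter_eq_left.2 (show hamCycles G F X ⊆ {C | p C} from hp)] at hbound
  exact hbound.trans (pow_le_pow_right₀ one_le_ρ (by omega))

lemma ncard_le_of_hasBranch_of_hasBranch {p₁ p₂ : Finset (Sym2 V) → Prop} {g₁ g₂ : ℕ}
    (IH : CountBoundBelow G #(undecided G F X)) (hF : F.Nonempty)
    (hp : ∀ C ∈ hamCycles G F X, p₁ C ∨ p₂ C) (h₁ : HasBranch G F X p₁ g₁)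
    (h₂ : HasBranch G F X p₂ g₂) (hg : (4 ≤ g₁ ∧ 4 ≤ g₂) ∨ (3 ≤ g₁ ∧ 6 ≤ g₂)) :
    ((hamCycles G F X).ncard : ℝ) ≤ ρ ^ #(undecided G F X) := by
  obtain ⟨k₁, hk₁, hbound₁⟩ := h₁.exists_ncard_le IH hF (by omega)
  obtain ⟨k₂, hk₂, hbound₂⟩ := h₂.exists_ncard_le IH hF (by omega)
  have hsplit : hamCycles G F X ⊆ (hamCycles G F X ∩ {C | p₁ C}) ∪ (hamCycles G F X ∩ {C | p₂ C}) :=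
    fun C hC ↦ (hp C hC).imp (⟨hC, ·⟩) (⟨hC, ·⟩)
  calc ((hamCycles G F X).ncard : ℝ)
      ≤ (hamCycles G F X ∩ {C | p₁ C}).ncard + (hamCycles G F X ∩ {C | p₂ C}).ncard := by
        exact_mod_cast (Set.ncard_le_ncard hsplit).trans (Set.ncard_union_le _ _)
    _ ≤ ρ ^ k₁ + ρ ^ k₂ := add_le_add hbound₁ hbound₂
    _ ≤ ρ ^ #(undecided G F X) := pow_add_pow_le_pow (by omega)

variable (G) in
/-- The degree constraint at `v` forces none of its undecided edges. -/
structure IsOpenVertex (F X : Finset (Sym2 V)) (v : V) : Prop where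
  degree_eq : G.degree v = 3
  disjoint : Disjoint (G.incidenceFinset v) X
  card_inter_le : #(F ∩ G.incidenceFinset v) ≤ 1

lemma IsOpenVertex.card_incidenceFinset (hv : IsOpenVertex G F X v) :
    #(G.incidenceFinset v) = 3 := by
  rw [card_incidenceFinset_eq_degree, hv.degree_eq]

lemma hasBranch_of_not_isOpenVertex (hdeg : G.degree v ≤ 3) (he : e ∈ undecided G F X)
    (hv : v ∈ e) (hnot : ¬ IsOpenVertex G F X v) : HasBranch G F X (fun _ ↦ True) 1 := by
  obtain ⟨heE, heF, heX⟩ := mem_undecided.1 he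
  have heI : e ∈ G.incidenceFinset v := (mem_incidenceFinset _ _ _).2 ⟨heE, hv⟩
  by_cases hF2 : 2 ≤ #(F ∩ G.incidenceFinset v)
  · refine ⟨∅, {e}, by simpa using he, by simp, fun C hC _ ↦ ⟨empty_subset _, ?_⟩⟩
    refine disjoint_singleton_right.2 fun heC ↦ heF ?_
    exact inter_subset_of_card_inter_eq_two (card_inter_incidenceFinset hC v) hC.2.1 hF2
      (mem_inter.2 ⟨heC, heI⟩)
  · have hX : #(G.incidenceFinset v \ X) ≤ 2 := by
      by_cases hdisj : Disjoint (G.incidenceFinset v) X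
      · have : G.degree v ≠ 3 := fun h3 ↦ hnot ⟨h3, hdisj, by omega⟩
        have := card_le_card (sdiff_subset (s := G.incidenceFinset v) (t := X))
        rw [card_incidenceFinset_eq_degree] at this
        omega
      · obtain ⟨x, hxI, hxX⟩ := not_disjoint_iff.1 hdisj
        have := card_le_card (sdiff_subset_sdiff (subset_refl (G.incidenceFinset v))
          (singleton_subset_iff.2 hxX))
        rw [sdiff_singleton_eq_erase, card_erase_of_mem hxI, card_incidenceFinset_eq_degree]
          at this
        omega
    refine ⟨{e}, ∅, by simpa using he, by simp, fun C hC _ ↦ ⟨?_, disjoint_empty_right _⟩⟩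
    exact singleton_subset_iff.2 <| sdiff_subset_of_card_inter_eq_two
      (card_inter_incidenceFinset hC v) hC.2.2 hX (mem_sdiff.2 ⟨heI, heX⟩)

lemma ncard_hamCycles_le_one (hF : F.Nonempty)
    (h : ∀ e ∈ undecided G F X, ∀ v ∈ e, F ∩ G.incidenceFinset v = ∅) :
    (hamCycles G F X).ncard ≤ 1 := by
  have heq (C) (hC : C ∈ hamCycles G F X) : C = F := by
    refine Subset.antisymm (fun e he ↦ ?_) hC.2.1
    refine hC.1.subset_of_forall_mem (F := F) (by simpa using hF)
      (fun e he x hxe ⟨f, hf, hxf⟩ ↦ ?_) (mem_coe.2 he)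
    by_contra heF
    have hXe : e ∉ X := disjoint_left.1 hC.2.2 he
    have hfE : f ∈ G.edgeSet := hC.1.subset_edgeSet (hC.2.1 hf)
    have := h e (mem_undecided.2 ⟨hC.1.subset_edgeSet he, heF, hXe⟩) x hxe
    simp only [eq_empty_iff_forall_notMem, mem_inter, mem_incidenceFinset] at this
    exact this f ⟨hf, hfE, hxf⟩
  exact (Set.ncard_le_one (Set.toFinite _)).2 fun C hC D hD ↦ (heq C hC).trans (heq D hD).symm

variable (G) in
def IsReduced (F X : Finset (Sym2 V)) : Prop :=
  ∀ e ∈ undecided G F X, ∀ v ∈ e, IsOpenVertex G F X v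

lemma IsOpenVertex.incidenceFinset_subset_undecided (hv : IsOpenVertex G F X v)
    (hvF : F ∩ G.incidenceFinset v = ∅) : G.incidenceFinset v ⊆ undecided G F X := by
  intro e he
  have heE := ((mem_incidenceFinset _ _ _).1 he).1
  refine mem_undecided.2 ⟨heE, fun heF ↦ ?_, disjoint_left.1 hv.disjoint he⟩
  simpa [hvF] using mem_inter.2 ⟨heF, he⟩

lemma IsOpenVertex.exists_third {f : Sym2 V} (hv : IsOpenVertex G F X v)
    (hf : f ∈ F ∩ G.incidenceFinset v) (he : e ∈ undecided G F X) (hve : v ∈ e) :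
    ∃ y, s(v, y) ∈ undecided G F X ∧ s(v, y) ≠ e ∧
      ∀ C ∈ hamCycles G F X, s(v, y) ∈ C ↔ e ∉ C := by
  obtain ⟨heE, heF, -⟩ := mem_undecided.1 he
  have heI : e ∈ G.incidenceFinset v := (mem_incidenceFinset _ _ _).2 ⟨heE, hve⟩
  have hfe : f ≠ e := fun h ↦ heF (h ▸ (mem_inter.1 hf).1)
  have hlt : #{f, e} < #(G.incidenceFinset v) := by
    rw [card_pair hfe, hv.card_incidenceFinset]
    norm_num
  obtain ⟨g, hgI, hg⟩ := exists_mem_notMem_of_card_lt_card hlt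
  simp only [mem_insert, mem_singleton, not_or] at hg
  obtain ⟨hgE, hvg⟩ := (mem_incidenceFinset _ _ _).1 hgI
  have hgF : g ∉ F := fun hgF ↦ by
    have := card_le_card (s := {f, g}) (t := F ∩ G.incidenceFinset v)
      (by simp [insert_subset_iff, (mem_inter.1 hf).1, (mem_inter.1 hf).2, hgF, hgI])
    rw [card_pair (Ne.symm hg.1)] at this
    exact absurd hv.card_inter_le (by omega)
  obtain ⟨y, rfl⟩ : ∃ y, g = s(v, y) := ⟨_, (Sym2.other_spec hvg).symm⟩
  refine ⟨y, mem_undecided.2 ⟨hgE, hgF, disjoint_left.1 hv.disjoint hgI⟩, hg.2,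
    fun C hC ↦ ?_⟩
  refine mem_iff_notMem_of_card_inter_eq_two (card_inter_incidenceFinset hC v)
    hv.card_incidenceFinset.le (hC.2.1 (mem_inter.1 hf).1)
    (mem_inter.1 hf).2 hgI heI (Ne.symm hg.1) hfe hg.2

variable (G) in
/-- `u` has one forced edge besides `s(u, a)` and `s(u, w)`. -/
structure Fork (F X : Finset (Sym2 V)) (u a w : V) : Prop where
  left_mem : s(u, a) ∈ undecided G F X
  right_mem : s(u, w) ∈ undecided G F X
  ne : a ≠ w
  mem_iff : ∀ C ∈ hamCycles G F X, s(u, w) ∈ C ↔ s(u, a) ∉ C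

lemma Fork.symm (hk : Fork G F X u a w) : Fork G F X u w a :=
  ⟨hk.right_mem, hk.left_mem, hk.ne.symm, fun C hC ↦ by have := hk.mem_iff C hC; tauto⟩

lemma Fork.adj_left (hk : Fork G F X u a w) : G.Adj u a := (mem_undecided.1 hk.left_mem).1

lemma Fork.adj_right (hk : Fork G F X u a w) : G.Adj u w := hk.symm.adj_left

lemma ncard_le_of_four_linked {e₁ e₂ g h : Sym2 V} (IH : CountBoundBelow G #(undecided G F X))
    (hF : F.Nonempty) (hS : {e₁, e₂, g, h} ⊆ undecided G F X)
    (hcard : g ≠ h → #{e₁, e₂, g, h} = 4)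
    (hlink : ∀ C ∈ hamCycles G F X, (e₂ ∈ C ↔ e₁ ∉ C) ∧ (g ∈ C ↔ e₁ ∉ C) ∧ (h ∈ C ↔ e₁ ∈ C)) :
    ((hamCycles G F X).ncard : ℝ) ≤ ρ ^ #(undecided G F X) := by
  by_cases hgh : g = h
  · have : hamCycles G F X = ∅ := Set.eq_empty_of_forall_notMem fun C hC ↦ by
      have := hlink C hC
      subst hgh
      tauto
    simp only [this, Set.ncard_empty, Nat.cast_zero]
    exact pow_nonneg ρ_nonneg _
  have hunion : ({e₁, h} ∪ {e₂, g} : Finset (Sym2 V)) = {e₁, e₂, g, h} := by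
    ext
    simp only [mem_union, mem_insert, mem_singleton]
    tauto
  have branch {p : Finset (Sym2 V) → Prop} {P Q : Finset (Sym2 V)}
      (hPQ : P ∪ Q = {e₁, e₂, g, h}) (hPQC : ∀ C ∈ hamCycles G F X, p C → P ⊆ C ∧ Disjoint C Q) :
      HasBranch G F X p 4 :=
    ⟨P, Q, hPQ ▸ hS, by rw [hPQ, hcard hgh], hPQC⟩
  refine ncard_le_of_hasBranch_of_hasBranch IH hF (fun C _ ↦ em (e₁ ∈ C))
    (branch hunion fun C hC he₁ ↦ ?_) (branch ((union_comm _ _).trans hunion) fun C hC he₁ ↦ ?_)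
    (Or.inl ⟨le_rfl, le_rfl⟩) <;>
  · have := hlink C hC
    simp only [insert_subset_iff, singleton_subset_iff, disjoint_insert_right,
      disjoint_singleton_right]
    tauto

lemma card_incidenceFinset_inter_le_one (h : v ≠ w) :
    #(G.incidenceFinset v ∩ G.incidenceFinset w) ≤ 1 := by
  refine (card_le_card (t := {s(v, w)}) fun e he ↦ ?_).trans (card_singleton _).le
  simpa using G.incidenceSet_inter_incidenceSet_subset h (by simpa using he)

lemma Fork.hasBranch_of_free (hk : Fork G F X u a w) (hw : IsOpenVertex G F X w)
    (hwF : F ∩ G.incidenceFinset w = ∅) : HasBranch G F X (s(u, a) ∈ ·) 4 := by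
  have hwI := mk_mem_incidenceFinset_right hk.adj_right
  have hnot : s(u, a) ∉ G.incidenceFinset w := by
    simp [mk'_mem_incidenceSet_iff, hk.adj_right.ne.symm, hk.ne.symm]
  have hunion : insert (s(u, a)) ((G.incidenceFinset w).erase (s(u, w))) ∪ {s(u, w)} =
      insert (s(u, a)) (G.incidenceFinset w) := by
    rw [insert_union, union_comm, ← insert_eq, insert_erase hwI]
  refine ⟨insert (s(u, a)) ((G.incidenceFinset w).erase (s(u, w))), {s(u, w)}, ?_, ?_,
    fun C hC hua ↦ ?_⟩
  · rw [hunion]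
    exact insert_subset hk.left_mem (hw.incidenceFinset_subset_undecided hwF)
  · rw [hunion, card_insert_of_notMem hnot, hw.card_incidenceFinset]
  · have huw : s(u, w) ∉ C := fun h ↦ (hk.mem_iff C hC).1 h hua
    refine ⟨insert_subset hua ?_, disjoint_singleton_right.2 huw⟩
    exact erase_subset_of_card_inter_eq_two (card_inter_incidenceFinset hC w)
      hw.card_incidenceFinset.le hwI huw

lemma ncard_le_of_fork_free_free (IH : CountBoundBelow G #(undecided G F X))
    (hF : F.Nonempty) (hk : Fork G F X u a w)
    (ha : IsOpenVertex G F X a) (haF : F ∩ G.incidenceFinset a = ∅)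
    (hw : IsOpenVertex G F X w) (hwF : F ∩ G.incidenceFinset w = ∅) :
    ((hamCycles G F X).ncard : ℝ) ≤ ρ ^ #(undecided G F X) :=
  ncard_le_of_hasBranch_of_hasBranch IH hF (fun C hC ↦ by have := hk.mem_iff C hC; tauto)
    (hk.hasBranch_of_free hw hwF) (hk.symm.hasBranch_of_free ha haF) (Or.inl ⟨le_rfl, le_rfl⟩)

lemma ncard_le_of_fork_forced_forced {fa fw : Sym2 V} (IH : CountBoundBelow G #(undecided G F X))
    (hF : F.Nonempty) (hred : IsReduced G F X) (hk : Fork G F X u a w)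
    (hfa : fa ∈ F ∩ G.incidenceFinset a) (hfw : fw ∈ F ∩ G.incidenceFinset w) :
    ((hamCycles G F X).ncard : ℝ) ≤ ρ ^ #(undecided G F X) := by
  obtain ⟨z, hz, hzu, hzC⟩ := (hred _ hk.left_mem a (Sym2.mem_mk_right _ _)).exists_third hfa
    hk.left_mem (Sym2.mem_mk_right _ _)
  obtain ⟨y, hy, hyu, hyC⟩ := (hred _ hk.right_mem w (Sym2.mem_mk_right _ _)).exists_third hfw
    hk.right_mem (Sym2.mem_mk_right _ _)
  have := hk.adj_left.ne
  have := hk.adj_right.ne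
  have := hk.ne
  refine ncard_le_of_four_linked IH hF (e₁ := s(u, a)) (e₂ := s(u, w)) (g := s(a, z)) (h := s(w, y))
    ?_ (fun hne ↦ ?_) (fun C hC ↦ ?_)
  · simp [insert_subset_iff, hk.left_mem, hk.right_mem, hz, hy]
  · grind [card_insert_of_notMem, card_singleton, Sym2.eq_iff]
  · have := hk.mem_iff C hC
    have := hzC C hC
    have := hyC C hC
    tauto

lemma Fork.hasBranch_of_free_free (hk : Fork G F X u a w) (hw : IsOpenVertex G F X w)
    (hwF : F ∩ G.incidenceFinset w = ∅) (hz : IsOpenVertex G F X z)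
    (hzF : F ∩ G.incidenceFinset z = ∅) (hza : s(a, z) ∈ undecided G F X) (hzu : z ≠ u)
    (hzw : z ≠ w) (hzC : ∀ C ∈ hamCycles G F X, s(a, z) ∈ C ↔ s(u, a) ∉ C) :
    HasBranch G F X (s(u, a) ∈ ·) 6 := by
  set I := G.incidenceFinset w ∪ G.incidenceFinset z
  have hwI := mk_mem_incidenceFinset_right hk.adj_right
  have hzI := mk_mem_incidenceFinset_right (mem_undecided.1 hza).1
  have hQ : {s(u, w), s(a, z)} ⊆ I := by simp [I, insert_subset_iff, hwI, hzI]
  have hunion : insert (s(u, a)) (I \ {s(u, w), s(a, z)}) ∪ {s(u, w), s(a, z)} =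
      insert (s(u, a)) I := by
    rw [insert_union, sdiff_union_of_subset hQ]
  have hnot : s(u, a) ∉ I := by
    have := hk.adj_right.ne
    have := (mem_undecided.1 hza).1.ne
    simp [I, mk'_mem_incidenceSet_iff, hk.ne.symm, hzu]
    grind
  refine ⟨insert (s(u, a)) (I \ {s(u, w), s(a, z)}), {s(u, w), s(a, z)}, ?_, ?_,
    fun C hC hua ↦ ?_⟩
  · rw [hunion]
    exact insert_subset hk.left_mem (union_subset (hw.incidenceFinset_subset_undecided hwF)
      (hz.incidenceFinset_subset_undecided hzF))
  · rw [hunion, card_insert_of_notMem hnot]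
    have hcard := card_union_add_card_inter (G.incidenceFinset w) (G.incidenceFinset z)
    rw [hw.card_incidenceFinset, hz.card_incidenceFinset] at hcard
    have := card_incidenceFinset_inter_le_one (G := G) (Ne.symm hzw)
    change 6 ≤ #(G.incidenceFinset w ∪ G.incidenceFinset z) + 1
    omega
  · have huw : s(u, w) ∉ C := fun h ↦ (hk.mem_iff C hC).1 h hua
    have haz : s(a, z) ∉ C := fun h ↦ (hzC C hC).1 h hua
    refine ⟨insert_subset hua fun x hx ↦ ?_, by simp [huw, haz]⟩
    simp only [I, mem_sdiff, mem_union, mem_insert, mem_singleton, not_or] at hx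
    obtain ⟨hx | hx, hxw, hxz⟩ := hx
    · exact erase_subset_of_card_inter_eq_two (card_inter_incidenceFinset hC w)
        hw.card_incidenceFinset.le hwI huw (mem_erase.2 ⟨hxw, hx⟩)
    · exact erase_subset_of_card_inter_eq_two (card_inter_incidenceFinset hC z)
        hz.card_incidenceFinset.le hzI haz (mem_erase.2 ⟨hxz, hx⟩)

lemma Fork.hasBranch_notMem (hk : Fork G F X u a w) (hza : s(a, z) ∈ undecided G F X)
    (hzu : z ≠ u) (hzC : ∀ C ∈ hamCycles G F X, s(a, z) ∈ C ↔ s(u, a) ∉ C) :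
    HasBranch G F X (s(u, a) ∉ ·) 3 := by
  have := hk.adj_left.ne
  have := hk.ne
  refine ⟨{s(u, w), s(a, z)}, {s(u, a)}, ?_, ?_, fun C hC hua ↦ ?_⟩
  · simp [insert_subset_iff, hk.left_mem, hk.right_mem, hza]
  · grind [card_insert_of_notMem, card_singleton, Sym2.eq_iff]
  · simp [insert_subset_iff, (hk.mem_iff C hC).2 hua, (hzC C hC).2 hua, hua]

lemma ncard_le_of_fork_of_free_third (IH : CountBoundBelow G #(undecided G F X))
    (hF : F.Nonempty) (hk : Fork G F X u a w) (hw : IsOpenVertex G F X w)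
    (hwF : F ∩ G.incidenceFinset w = ∅) (hz : IsOpenVertex G F X z)
    (hzF : F ∩ G.incidenceFinset z = ∅) (hza : s(a, z) ∈ undecided G F X) (hzu : z ≠ u)
    (hzC : ∀ C ∈ hamCycles G F X, s(a, z) ∈ C ↔ s(u, a) ∉ C) :
    ((hamCycles G F X).ncard : ℝ) ≤ ρ ^ #(undecided G F X) := by
  by_cases hzw : z = w
  · subst hzw
    -- a cycle through `s(u, a)` would avoid both `s(u, z)` and `s(a, z)`
    refine ncard_le_of_hasBranch IH hF (fun C hC hua ↦ ?_) (hk.hasBranch_notMem hza hzu hzC)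
      (by norm_num)
    have huz : s(u, z) ∉ C := fun h ↦ (hk.mem_iff C hC).1 h hua
    refine (hzC C hC).1 (erase_subset_of_card_inter_eq_two (card_inter_incidenceFinset hC z)
      hz.card_incidenceFinset.le (mk_mem_incidenceFinset_right hk.adj_right) huz
      (mem_erase.2 ⟨?_, mk_mem_incidenceFinset_right (mem_undecided.1 hza).1⟩)) hua
    simp [hk.adj_left.ne.symm, hzu]
  · exact ncard_le_of_hasBranch_of_hasBranch IH hF (fun C _ ↦ em' (s(u, a) ∈ C))
      (hk.hasBranch_notMem hza hzu hzC) (hk.hasBranch_of_free_free hw hwF hz hzF hza hzu hzw hzC)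
      (Or.inr ⟨le_rfl, le_rfl⟩)

lemma ncard_le_of_fork_forced_free {fa : Sym2 V} (IH : CountBoundBelow G #(undecided G F X))
    (hF : F.Nonempty) (hred : IsReduced G F X) (hk : Fork G F X u a w)
    (hfa : fa ∈ F ∩ G.incidenceFinset a) (hwF : F ∩ G.incidenceFinset w = ∅) :
    ((hamCycles G F X).ncard : ℝ) ≤ ρ ^ #(undecided G F X) := by
  have hw := hred _ hk.right_mem w (Sym2.mem_mk_right _ _)
  obtain ⟨z, hza, hza', hzC⟩ := (hred _ hk.left_mem a (Sym2.mem_mk_right _ _)).exists_third hfa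
    hk.left_mem (Sym2.mem_mk_right _ _)
  have hzu : z ≠ u := by rintro rfl; exact hza' Sym2.eq_swap
  have hz := hred _ hza z (Sym2.mem_mk_right _ _)
  rcases (F ∩ G.incidenceFinset z).eq_empty_or_nonempty with hzF | ⟨fz, hfz⟩
  · exact ncard_le_of_fork_of_free_third IH hF hk hw hwF hz hzF hza hzu hzC
  obtain ⟨y, hy, hyz, hyC⟩ := hz.exists_third hfz hza (Sym2.mem_mk_right _ _)
  have hzw : z ≠ w := by rintro rfl; simp [hwF] at hfz
  have := hk.adj_left.ne
  have := hk.adj_right.ne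
  have := hk.ne
  have := (G.mem_edgeSet.1 (mem_undecided.1 hza).1).ne
  refine ncard_le_of_four_linked IH hF (e₁ := s(u, a)) (e₂ := s(u, w)) (g := s(a, z))
    (h := s(z, y)) ?_ (fun _ ↦ ?_) (fun C hC ↦ ?_)
  · simp [insert_subset_iff, hk.left_mem, hk.right_mem, hza, hy]
  · grind [card_insert_of_notMem, card_singleton, Sym2.eq_iff]
  · have := hk.mem_iff C hC
    have := hzC C hC
    have := hyC C hC
    tauto

lemma ncard_le_of_fork (IH : CountBoundBelow G #(undecided G F X)) (hF : F.Nonempty)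
    (hred : IsReduced G F X) (hk : Fork G F X u a w) :
    ((hamCycles G F X).ncard : ℝ) ≤ ρ ^ #(undecided G F X) := by
  have ha := hred _ hk.left_mem a (Sym2.mem_mk_right _ _)
  have hw := hred _ hk.right_mem w (Sym2.mem_mk_right _ _)
  rcases (F ∩ G.incidenceFinset a).eq_empty_or_nonempty with haF | ⟨fa, hfa⟩ <;>
    rcases (F ∩ G.incidenceFinset w).eq_empty_or_nonempty with hwF | ⟨fw, hfw⟩
  · exact ncard_le_of_fork_free_free IH hF hk ha haF hw hwF
  · exact ncard_le_of_fork_forced_free IH hF hred hk.symm hfw haF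
  · exact ncard_le_of_fork_forced_free IH hF hred hk hfa hwF
  · exact ncard_le_of_fork_forced_forced IH hF hred hk hfa hfw

lemma ncard_le_of_countBoundBelow (hdeg : ∀ v, G.degree v ≤ 3)
    (IH : CountBoundBelow G #(undecided G F X)) (hF : F.Nonempty) :
    ((hamCycles G F X).ncard : ℝ) ≤ ρ ^ #(undecided G F X) := by
  by_cases hforced : ∃ e ∈ undecided G F X, ∃ v ∈ e, ¬ IsOpenVertex G F X v
  · obtain ⟨e, he, v, hv, hnot⟩ := hforced
    exact ncard_le_of_hasBranch IH hF (fun _ _ ↦ trivial)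
      (hasBranch_of_not_isOpenVertex (hdeg v) he hv hnot) one_pos
  have hred : IsReduced G F X := fun e he v hv ↦ by_contra fun h ↦ hforced ⟨e, he, v, hv, h⟩
  by_cases hfork : ∃ e ∈ undecided G F X, ∃ u ∈ e, (F ∩ G.incidenceFinset u).Nonempty
  · obtain ⟨e, he, u, hue, f, hf⟩ := hfork
    obtain ⟨a, rfl⟩ : ∃ a, e = s(u, a) := ⟨_, (Sym2.other_spec hue).symm⟩
    obtain ⟨w, hw, hwa, hwC⟩ := (hred _ he u hue).exists_third hf he hue
    exact ncard_le_of_fork IH hF hred ⟨he, hw, fun h ↦ hwa (h ▸ rfl), hwC⟩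
  · simp only [not_exists, not_and, not_nonempty_iff_eq_empty] at hfork
    calc ((hamCycles G F X).ncard : ℝ) ≤ 1 := by exact_mod_cast ncard_hamCycles_le_one hF hfork
      _ ≤ ρ ^ #(undecided G F X) := one_le_pow₀ one_le_ρ

theorem ncard_hamCycles_le (hdeg : ∀ v, G.degree v ≤ 3) (hF : F.Nonempty) :
    ((hamCycles G F X).ncard : ℝ) ≤ ρ ^ #(undecided G F X) := by
  suffices ∀ k, CountBoundBelow G k from this _ F X hF (Nat.lt_succ_self _)
  intro k
  induction k with
  | zero => exact fun F X _ h ↦ absurd h (Nat.not_lt_zero _)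
  | succ k ih =>
    intro F X hF hlt
    rcases Nat.lt_succ_iff_lt_or_eq.1 hlt with hlt | rfl
    · exact ih F X hF hlt
    · exact ncard_le_of_countBoundBelow hdeg ih hF

theorem ncard_hamCycles_empty_le (hdeg : ∀ v, G.degree v ≤ 3) :
    ((hamCycles G ∅ ∅).ncard : ℝ) ≤ 2 * ρ ^ #G.edgeFinset := by
  rcases (hamCycles G ∅ ∅).eq_empty_or_nonempty with hempty | ⟨C₀, hC₀⟩
  · rw [hempty, Set.ncard_empty, Nat.cast_zero]
    exact mul_nonneg zero_le_two (pow_nonneg ρ_nonneg _)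
  obtain ⟨v, -⟩ := hC₀.1
  obtain ⟨e, f, hef, hpair⟩ := card_eq_two.1 (card_inter_incidenceFinset hC₀ v)
  have he : e ∈ G.incidenceFinset v := (mem_inter.1 (hpair ▸ mem_insert_self e {f})).2
  have hf : f ∈ G.incidenceFinset v := (mem_inter.1 (hpair ▸ mem_insert_of_mem
    (mem_singleton_self f))).2
  have hcover : hamCycles G ∅ ∅ ⊆ hamCycles G {e} ∅ ∪ hamCycles G {f} ∅ := by
    intro C hC
    by_cases heC : e ∈ C
    · exact Or.inl ⟨hC.1, singleton_subset_iff.2 heC, disjoint_empty_right _⟩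
    refine Or.inr ⟨hC.1, singleton_subset_iff.2 ?_, disjoint_empty_right _⟩
    refine erase_subset_of_card_inter_eq_two (card_inter_incidenceFinset hC v) ?_ he heC
      (mem_erase.2 ⟨hef.symm, hf⟩)
    exact (card_incidenceFinset_eq_degree _ _).trans_le (hdeg v)
  have hbound (e : Sym2 V) : ((hamCycles G {e} ∅).ncard : ℝ) ≤ ρ ^ #G.edgeFinset :=
    (ncard_hamCycles_le hdeg (singleton_nonempty e)).trans
      (pow_le_pow_right₀ one_le_ρ (card_le_card sdiff_subset))
  calc ((hamCycles G ∅ ∅).ncard : ℝ)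
      ≤ (hamCycles G {e} ∅).ncard + (hamCycles G {f} ∅).ncard := by
        exact_mod_cast (Set.ncard_le_ncard hcover).trans (Set.ncard_union_le _ _)
    _ ≤ 2 * ρ ^ #G.edgeFinset := by linarith [hbound e, hbound f]

end HamCycleCount

/-- There is a constant `c` such that every simple graph on `n` vertices with maximum degree 3
has at most `c · 2^(3n/8)` Hamiltonian cycles. -/
theorem stmt_5 :
    ∃ c : ℝ, ∀ (n : ℕ) (G : SimpleGraph (Fin n)),
      (∀ v, (G.neighborSet v).ncard ≤ 3) →
      ({C : Set (Sym2 (Fin n)) | IsHamCycleSet G C}.ncard : ℝ)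
        ≤ c * 2 ^ ((3 * n : ℝ) / 8) := by
  classical
  refine ⟨2, fun n G hdeg ↦ ?_⟩
  have hdeg' (v : Fin n) : G.degree v ≤ 3 := by
    have := hdeg v
    rwa [Set.ncard_eq_toFinset_card'] at this
  have hedges : (2 * #G.edgeFinset : ℝ) ≤ 3 * n := by
    exact_mod_cast (two_mul_card_edgeFinset_le hdeg').trans_eq (by rw [Fintype.card_fin])
  rw [HamCycleCount.ncard_setOf_isHamCycleSet]
  calc _ ≤ 2 * HamCycleCount.ρ ^ #G.edgeFinset := HamCycleCount.ncard_hamCycles_empty_le hdeg'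
    _ ≤ 2 * 2 ^ ((3 * n : ℝ) / 8) := by
      rw [HamCycleCount.ρ_pow_eq_rpow]
      gcongr 2 * ?_
      exact Real.rpow_le_rpow_of_exponent_le (by norm_num) (by linarith)
end

section
/- Let T : ℕ → ℝ satisfy T(u) ≤ 1 + max(T(u-1), 2·T(u-4), T(u-3) + T(u-6)) for all u ≥ 6, with T bounded on {0,...,5}. Then T(u) = O(2^{u/4}). -/
/-- If a nonnegative `T : ℕ → ℝ` satisfies
`T u ≤ 1 + max (T (u-1)) (max (2·T (u-4)) (T (u-3) + T (u-6)))` for all `u ≥ 6`,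
then `T u = O(2^(u/4))`. -/
theorem stmt_11 (T : ℕ → ℝ) (hpos : ∀ u, 0 ≤ T u)
    (hrec : ∀ u, 6 ≤ u →
      T u ≤ 1 + max (T (u - 1)) (max (2 * T (u - 4)) (T (u - 3) + T (u - 6)))) :
    ∃ c : ℝ, ∀ u : ℕ, T u ≤ c * 2 ^ ((u : ℝ) / 4) := by
  set y : ℝ := (2 : ℝ) ^ ((1 : ℝ) / 4) with hy
  have hy1 : 1 < y := by
    rw [hy]
    apply Real.one_lt_rpow_iff_of_pos (by norm_num) |>.2
    norm_num
  have hy0 : 0 < y := lt_trans one_pos hy1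
  have hy4 : y ^ 4 = 2 := by
    rw [hy, ← Real.rpow_natCast ((2:ℝ) ^ ((1:ℝ)/4)) 4, ← Real.rpow_mul (by norm_num)]
    norm_num
  have hyu : ∀ u : ℕ, y ^ u = (2 : ℝ) ^ ((u : ℝ) / 4) := by
    intro u
    rw [hy, ← Real.rpow_natCast ((2:ℝ) ^ ((1:ℝ)/4)) u, ← Real.rpow_mul (by norm_num)]
    ring_nf
  set c : ℝ := T 0 + T 1 + T 2 + T 3 + T 4 + T 5 + 7 with hc
  have hc7 : 7 ≤ c := by
    have := hpos 0; have := hpos 1; have := hpos 2; have := hpos 3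
    have := hpos 4; have := hpos 5
    rw [hc]; linarith
  -- key numeric facts about y
  have q5 : y ^ 5 = 2 * y := by linear_combination y * hy4
  have q6 : y ^ 6 = 2 * y ^ 2 := by linear_combination y ^ 2 * hy4
  have k1 : (1 : ℝ) ≤ 14 * y ^ 2 - 14 * y := by
    nlinarith [sq_nonneg (y - 1), sq_nonneg (y^2 - 1), sq_nonneg (y^2 - y),
      mul_pos (sub_pos.2 hy1) (sub_pos.2 hy1)]
  have k3 : y ^ 3 + 1 ≤ 2 * y ^ 2 := by
    nlinarith [sq_nonneg (y - 1), sq_nonneg (y^2 - 1), sq_nonneg (y^2 - y), sq_nonneg (y^3 - 1)]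
  have key : ∀ u : ℕ, T u ≤ c * y ^ u - 1 := by
    intro u
    induction u using Nat.strong_induction_on with
    | _ u ih =>
      rcases lt_or_ge u 6 with hu | hu
      · -- base case: u ≤ 5
        have hyp : (1 : ℝ) ≤ y ^ u := one_le_pow₀ (le_of_lt hy1)
        have hTu : T u + 7 ≤ c := by
          interval_cases u <;>
          · have := hpos 0; have := hpos 1; have := hpos 2; have := hpos 3
            have := hpos 4; have := hpos 5
            rw [hc]; linarith
        nlinarith [hpos u]
      · obtain ⟨n, rfl⟩ : ∃ n, u = n + 6 := ⟨u - 6, by omega⟩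
        have h := hrec (n + 6) (by omega)
        have e1 : n + 6 - 1 = n + 5 := by omega
        have e4 : n + 6 - 4 = n + 2 := by omega
        have e3 : n + 6 - 3 = n + 3 := by omega
        have e6 : n + 6 - 6 = n := by omega
        rw [e1, e4, e3, e6] at h
        have i1 := ih (n + 5) (by omega)
        have i4 := ih (n + 2) (by omega)
        have i3 := ih (n + 3) (by omega)
        have i6 := ih n (by omega)
        have hz1 : (1 : ℝ) ≤ y ^ n := one_le_pow₀ (le_of_lt hy1)
        set z : ℝ := y ^ n with hzdef
        have p5 : y ^ (n + 5) = z * (2 * y) := by rw [hzdef, pow_add, q5]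
        have p2 : y ^ (n + 2) = z * y ^ 2 := by rw [hzdef, pow_add]
        have p3 : y ^ (n + 3) = z * y ^ 3 := by rw [hzdef, pow_add]
        have p6 : y ^ (n + 6) = z * (2 * y ^ 2) := by rw [hzdef, pow_add, q6]
        rw [p5] at i1; rw [p2] at i4; rw [p3] at i3; rw [p6]
        have hcz : (7 : ℝ) ≤ c * z := by
          have := mul_le_mul hc7 hz1 (by norm_num) (by linarith : (0:ℝ) ≤ c)
          linarith
        have hcz0 : (0 : ℝ) < c * z := by linarith
        rcases le_total (T (n + 5)) (max (2 * T (n + 2)) (T (n + 3) + T n)) with hm | hm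
        · rw [max_eq_right hm] at h
          rcases le_total (2 * T (n + 2)) (T (n + 3) + T n) with hm2 | hm2
          · rw [max_eq_right hm2] at h
            have := mul_le_mul_of_nonneg_left k3 (le_of_lt hcz0)
            ring_nf at this i3 i6 h ⊢
            linarith
          · rw [max_eq_left hm2] at h
            ring_nf at i4 h ⊢
            linarith
        · rw [max_eq_left hm] at h
          -- need c * z * (2y^2 - 2y) ≥ 1
          have hd : (0 : ℝ) ≤ 2 * y ^ 2 - 2 * y := by linarith
          have h2 : 7 * (2 * y ^ 2 - 2 * y) ≤ c * z * (2 * y ^ 2 - 2 * y) :=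
            mul_le_mul_of_nonneg_right hcz hd
          ring_nf at h2 i1 h ⊢
          linarith
  refine ⟨c, fun u => ?_⟩
  rw [← hyu u]
  have := key u
  linarith
end

section
/- Let G, F, and the disjoint 4-cycles C_i be as in the minimum-spanning-tree step: G \ F is a disjoint union of 4-cycles covering all vertices, each vertex incident to exactly one forced edge. Let H = ∪_i H_i where H_i is a fixed choice of opposite pair in C_i, and let G' be the graph whose vertices are connected components of F ∪ H, with an edge between two components for each C_i containing H_i-edges from both components. Then for every spanning tree T' of G', the symmetric difference of F ∪ H with the union of cycles C_i corresponding to edges of T' (i.e., replacing H_i by C_i \ H_i for those i) is a Hamiltonian cycle of G. -/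
/-!
Every vertex lies on exactly one forced edge and on exactly one edge of `H`, so `F ∪ H` is a
disjoint union of cycles. Let `ab`, `cd` be the two `H_i`-edges of the 4-cycle `C_i = abcd`. If
`a` and `c` lie on different cycles of `F ∪ H`, replacing `ab`, `cd` by `bc`, `da` splices these
two cycles into one and leaves the others alone, so the components of the new 2-factor are the
old ones with those of `a` and `c` merged. Since the spanning tree of the component graph has no
cycle, the endpoints of each tree edge are still in different components when their 4-cycle is
switched; after all switches the 2-factor is connected, i.e. a single Hamiltonian cycle.
-/

open Function

namespace SimpleGraph

variable {V W : Type*}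

theorem Reachable.lift {A : SimpleGraph V} {B : SimpleGraph W} (f : V → W)
    (h : ∀ u v, A.Adj u v → B.Reachable (f u) (f v)) {u v : V} (huv : A.Reachable u v) :
    B.Reachable (f u) (f v) := by
  rw [reachable_iff_reflTransGen] at huv ⊢
  exact Relation.ReflTransGen.lift' f
    (fun a b hab => (reachable_iff_reflTransGen _ _).1 (h a b hab)) _ _ huv

theorem Reachable.of_map_of_surjective {A : SimpleGraph V} {B : SimpleGraph W} {f : V → W}
    (hf : Surjective f) (hfiber : ∀ u v, f u = f v → A.Reachable u v)
    (hadj : ∀ u v, B.Adj (f u) (f v) → A.Reachable u v) {u v : V}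
    (h : B.Reachable (f u) (f v)) : A.Reachable u v := by
  rw [reachable_iff_reflTransGen] at h
  suffices ∀ y, Relation.ReflTransGen B.Adj (f u) y → ∀ v, f v = y → A.Reachable u v from
    this _ h v rfl
  intro y hy
  induction hy with
  | refl => exact fun v hv => hfiber u v hv.symm
  | @tail y z _ hyz ih =>
    intro v hv
    obtain ⟨w, rfl⟩ := hf y
    exact (ih w rfl).trans (hadj w v (hv ▸ hyz))

theorem Reachable.of_sym2_eq {A : SimpleGraph V} {a b x y : V} (he : s(x, y) = s(a, b))
    (h : A.Reachable a b) : A.Reachable x y := by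
  rcases Sym2.eq_iff.1 he with ⟨rfl, rfl⟩ | ⟨rfl, rfl⟩
  exacts [h, h.symm]

theorem reachable_sup_congr {A B : SimpleGraph V} (h : A.Reachable = B.Reachable)
    (C : SimpleGraph V) : (A ⊔ C).Reachable = (B ⊔ C).Reachable := by
  have key : ∀ {A B : SimpleGraph V}, A.Reachable = B.Reachable →
      ∀ u v, (A ⊔ C).Reachable u v → (B ⊔ C).Reachable u v := by
    intro A B h u v huv
    refine huv.lift id fun x y hxy => ?_
    rcases hxy with hxy | hxy
    · exact (h ▸ hxy.reachable : B.Reachable x y).mono le_sup_left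
    · exact hxy.reachable.mono le_sup_right
  ext u v
  exact ⟨key h u v, key h.symm u v⟩

theorem reachable_sup_fromEdgeSet_iff (K : SimpleGraph V) (P : Set (Sym2 V)) {u v : V} :
    (K ⊔ fromEdgeSet P).Reachable u v ↔
      (fromEdgeSet (Sym2.map K.connectedComponentMk '' P)).Reachable
        (K.connectedComponentMk u) (K.connectedComponentMk v) := by
  have hP : ∀ x y, s(x, y) ∈ P → (K ⊔ fromEdgeSet P).Reachable x y := by
    intro x y hxy
    by_cases hne : x = y
    · rw [hne]
    · exact Adj.reachable (Or.inr ((fromEdgeSet_adj _).2 ⟨hxy, hne⟩))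
  constructor
  · refine fun h => h.lift _ fun x y hxy => ?_
    rcases hxy with hxy | hxy
    · rw [ConnectedComponent.eq.2 hxy.reachable]
    · by_cases hc : K.connectedComponentMk x = K.connectedComponentMk y
      · rw [hc]
      · exact Adj.reachable ((fromEdgeSet_adj _).2
          ⟨⟨_, ((fromEdgeSet_adj _).1 hxy).1, rfl⟩, hc⟩)
  · refine Reachable.of_map_of_surjective (fun c => c.exists_rep)
      (fun x y hxy => (ConnectedComponent.eq.1 hxy).mono le_sup_left) fun x y hxy => ?_
    obtain ⟨⟨e, he, hee⟩, -⟩ := (fromEdgeSet_adj _).1 hxy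
    induction e using Sym2.ind with
    | _ a b =>
    simp only [Sym2.map_mk, Sym2.eq_iff] at hee
    have hK : ∀ {c d}, K.connectedComponentMk c = K.connectedComponentMk d →
        (K ⊔ fromEdgeSet P).Reachable c d :=
      fun h => (ConnectedComponent.eq.1 h).mono le_sup_left
    rcases hee with ⟨hax, hby⟩ | ⟨hay, hbx⟩
    · exact (hK hax.symm).trans ((hP a b he).trans (hK hby))
    · exact (hK hbx.symm).trans ((hP a b he).symm.trans (hK hay))

theorem reachable_deleteEdges_pair {A : SimpleGraph V} {a b c : V} (d : V)
    (hab : (A.deleteEdges {s(a, b)}).Reachable a b) (hac : ¬A.Reachable a c) :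
    (A.deleteEdges {s(a, b), s(c, d)}).Reachable a b := by
  classical
  obtain ⟨p, hp⟩ := reachable_deleteEdges_iff_exists_walk.1 hab
  refine ⟨p.toDeleteEdges _ fun e he => ?_⟩
  rintro (rfl | rfl)
  · exact hp he
  · exact hac ⟨p.takeUntil c (p.fst_mem_support_of_mem_edges he)⟩

theorem reachable_eq_of_exchange {A A' : SimpleGraph V} {a b c d : V}
    (hle : A.deleteEdges {s(a, b), s(c, d)} ≤ A') (hge : A' ≤ A ⊔ edge b c ⊔ edge d a)
    (hda : A'.Adj d a) (hab : (A.deleteEdges {s(a, b)}).Reachable a b)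
    (hcd : (A.deleteEdges {s(c, d)}).Reachable c d) (hac : ¬A.Reachable a c) :
    A'.Reachable = (A ⊔ edge a c).Reachable := by
  have hab' : A'.Reachable a b := (reachable_deleteEdges_pair d hab hac).mono hle
  have hcd' : A'.Reachable c d := by
    rw [Set.pair_comm] at hle
    exact (reachable_deleteEdges_pair b hcd fun h => hac h.symm).mono hle
  have hac' : (A ⊔ edge a c).Reachable a c := by
    refine Adj.reachable (Or.inr ((edge_adj _ _ _ _).2 ⟨Or.inl ⟨rfl, rfl⟩, ?_⟩))
    rintro rfl
    exact hac .rfl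
  have hA : ∀ {x y}, A.Reachable x y → (A ⊔ edge a c).Reachable x y :=
    fun h => h.mono le_sup_left
  ext u v
  constructor
  · refine fun h => h.lift id fun x y hxy => ?_
    rcases hge hxy with (hxy | hxy) | hxy
    · exact hA hxy.reachable
    · refine Reachable.of_sym2_eq (Sym2.eq_iff.2 ((edge_adj _ _ _ _).1 hxy).1) ?_
      exact (hA (hab.mono (deleteEdges_le _)).symm).trans hac'
    · refine Reachable.of_sym2_eq (Sym2.eq_iff.2 ((edge_adj _ _ _ _).1 hxy).1) ?_
      exact (hA (hcd.mono (deleteEdges_le _)).symm).trans hac'.symm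
  · refine fun h => h.lift id fun x y hxy => ?_
    rcases hxy with hxy | hxy
    · by_cases h1 : s(x, y) = s(a, b)
      · exact .of_sym2_eq h1 hab'
      by_cases h2 : s(x, y) = s(c, d)
      · exact .of_sym2_eq h2 hcd'
      exact (hle ((deleteEdges_adj).2 ⟨hxy, by simp [h1, h2]⟩)).reachable
    · refine Reachable.of_sym2_eq (Sym2.eq_iff.2 ((edge_adj _ _ _ _).1 hxy).1) ?_
      exact hda.symm.reachable.trans hcd'.symm

theorem IsCycles.exists_isHamiltonianCycle [Finite V] [DecidableEq V] {A G : SimpleGraph V}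
    (hAG : A ≤ G) (hA : A.IsCycles) (hconn : A.Connected) {v : V}
    (hv : (A.neighborSet v).Nonempty) :
    ∃ p : G.Walk v v, p.IsHamiltonianCycle ∧ {e | e ∈ p.edges} = A.edgeSet := by
  classical
  have := Fintype.ofFinite V
  obtain ⟨p, hp, hverts⟩ :=
    hA.exists_cycle_toSubgraph_verts_eq_connectedComponentSupp (c := A.connectedComponentMk v)
      rfl hv
  have hverts' : ∀ w, w ∈ p.toSubgraph.verts := fun w => by
    rw [hverts]
    exact ConnectedComponent.eq.2 (hconn.preconnected w v)
  have hham : p.IsHamiltonianCycle := by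
    refine ⟨hp, hp.isPath_tail.isHamiltonian_of_mem fun w => ?_⟩
    rcases (Walk.mem_support_iff p).1 ((p.mem_verts_toSubgraph).1 (hverts' w)) with rfl | hw
    · exact p.tail.end_mem_support
    · rwa [Walk.support_tail_of_not_nil _ hp.not_nil]
  refine ⟨p.mapLe hAG, hham.map (f := Hom.ofLE hAG) bijective_id, ?_⟩
  rw [Walk.edges_mapLe_eq_edges]
  ext e
  induction e using Sym2.ind with
  | _ x y =>
  refine ⟨fun he => p.edges_subset_edgeSet he, fun he => ?_⟩
  change s(x, y) ∈ p.edges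
  rw [← Walk.mem_edges_toSubgraph, Subgraph.mem_edgeSet]
  exact (hp.adj_toSubgraph_iff_of_isCycles hA (hverts' x) y).2 he

theorem ncard_neighborSet_fromEdgeSet {s : Set (Sym2 V)} (hs : ∀ e ∈ s, ¬e.IsDiag) (v : V) :
    ((fromEdgeSet s).neighborSet v).ncard = {e ∈ s | v ∈ e}.ncard := by
  classical
  have hinc : (fromEdgeSet s).incidenceSet v = {e ∈ s | v ∈ e} := by
    ext e
    simp only [incidenceSet, edgeSet_fromEdgeSet, Set.mem_ofPred_eq, Set.mem_sdiff]
    exact ⟨fun h => ⟨h.1.1, h.2⟩, fun h => ⟨⟨h.1, hs e h.1⟩, h.2⟩⟩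
  rw [← Nat.card_coe_set_eq, ← Nat.card_coe_set_eq, ← hinc]
  exact Nat.card_congr ((fromEdgeSet s).incidenceSetEquivNeighborSet v).symm

theorem injOn_and_not_isDiag_of_ncard_le {ι : Type*} {f : ι → Sym2 W} {S : Set ι}
    (hS : S.Finite) (h : S.ncard ≤ (fromEdgeSet (f '' S)).edgeSet.ncard) :
    Set.InjOn f S ∧ ∀ i ∈ S, ¬(f i).IsDiag := by
  rw [edgeSet_fromEdgeSet] at h
  have h1 : (f '' S \ Sym2.diagSet).ncard ≤ (f '' S).ncard :=
    Set.ncard_le_ncard Set.sdiff_subset (hS.image f)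
  have h2 : (f '' S).ncard ≤ S.ncard := Set.ncard_image_le hS
  refine ⟨Set.injOn_of_ncard_image_eq (by omega) hS, fun i hi hd => ?_⟩
  have hdiff := Set.eq_of_subset_of_ncard_le (s := f '' S \ Sym2.diagSet) Set.sdiff_subset
    (by omega) (hS.image f)
  have hmem : f i ∈ f '' S \ Sym2.diagSet := by rw [hdiff]; exact Set.mem_image_of_mem f hi
  exact hmem.2 hd

theorem IsTree.not_reachable_of_ncard_eq {ι : Type*} [Finite W] {x y : ι → W} {S T : Set ι}
    (hS : S.Finite) (htree : (fromEdgeSet ((fun i => s(x i, y i)) '' S)).IsTree)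
    (hcard : S.ncard = Nat.card W - 1) (hTS : T ⊆ S) {i : ι} (hi : i ∈ S) (hiT : i ∉ T) :
    ¬(fromEdgeSet ((fun i => s(x i, y i)) '' T)).Reachable (x i) (y i) := by
  classical
  have := Fintype.ofFinite W
  set f : ι → Sym2 W := fun i => s(x i, y i)
  -- The count makes `f` injective on `S` without loops, so every `f i` is a bridge of the tree.
  have hedges : (fromEdgeSet (f '' S)).edgeSet.ncard = S.ncard := by
    have := htree.card_edgeFinset
    rw [Nat.card_eq_fintype_card] at hcard
    rw [← coe_edgeFinset, Set.ncard_coe_finset]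
    omega
  obtain ⟨hinj, hdiag⟩ := injOn_and_not_isDiag_of_ncard_le hS hedges.ge
  have hle : fromEdgeSet (f '' T) ≤ (fromEdgeSet (f '' S)).deleteEdges {f i} := by
    intro u v huv
    obtain ⟨⟨j, hj, hje⟩, hne⟩ := (fromEdgeSet_adj _).1 huv
    refine deleteEdges_adj.2 ⟨(fromEdgeSet_adj _).2 ⟨⟨j, hTS hj, hje⟩, hne⟩, ?_⟩
    rintro heq
    rw [Set.mem_singleton_iff, ← hje] at heq
    exact hiT (hinj (hTS hj) hi heq ▸ hj)
  have hbridge : (fromEdgeSet (f '' S)).IsBridge (f i) :=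
    isAcyclic_iff_forall_isBridge.1 htree.isAcyclic
      (by rw [edgeSet_fromEdgeSet]; exact ⟨⟨i, hi, rfl⟩, hdiag i hi⟩)
  exact fun h => isBridge_iff.1 hbridge (h.mono hle)

end SimpleGraph

open SimpleGraph

namespace FourCycles

variable {V : Type*} {m : ℕ} (q : Fin m → Fin 4 → V)

def cycleEdge (i : Fin m) (j : Fin 4) : Sym2 V := s(q i j, q i (j + 1))

def cycleMatching (τ : Fin m → Fin 4) : Set (Sym2 V) :=
  {e | ∃ i, e = cycleEdge q i (τ i) ∨ e = cycleEdge q i (τ i + 2)}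

def twoFactor (F : Set (Sym2 V)) (τ : Fin m → Fin 4) : SimpleGraph V :=
  fromEdgeSet (F ∪ cycleMatching q τ)

def chord (σ : Fin m → Fin 4) (i : Fin m) : Sym2 V := s(q i (σ i), q i (σ i + 2))

-- Moving the chosen pair of `C_i` by one position replaces `H_i` by `C_i \ H_i`.
open Classical in
noncomputable def shiftOn (σ : Fin m → Fin 4) (T : Set (Fin m)) (i : Fin m) : Fin 4 :=
  if i ∈ T then σ i + 1 else σ i

variable {q}

theorem shiftOn_empty (σ : Fin m → Fin 4) : shiftOn σ ∅ = σ := by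
  funext i
  simp [shiftOn]

theorem shiftOn_of_notMem {σ : Fin m → Fin 4} {T : Set (Fin m)} {i : Fin m} (hi : i ∉ T) :
    shiftOn σ T i = σ i := if_neg hi

theorem shiftOn_insert {σ : Fin m → Fin 4} {T : Set (Fin m)} {i : Fin m} (hi : i ∉ T) :
    shiftOn σ (insert i T) = update (shiftOn σ T) i (shiftOn σ T i + 1) := by
  funext j
  rcases eq_or_ne j i with rfl | hj
  · simp [shiftOn, hi]
  · rw [update_of_ne hj]
    simp only [shiftOn]
    split_ifs <;> simp_all

theorem mem_cycleMatching_update {τ : Fin m → Fin 4} {i : Fin m} {e : Sym2 V}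
    (he : e ∈ cycleMatching q τ) (h0 : e ≠ cycleEdge q i (τ i))
    (h2 : e ≠ cycleEdge q i (τ i + 2)) : e ∈ cycleMatching q (update τ i (τ i + 1)) := by
  obtain ⟨j, hj⟩ := he
  rcases eq_or_ne j i with rfl | hji
  · exact (hj.elim h0 h2).elim
  · exact ⟨j, by rwa [update_of_ne hji]⟩

theorem mem_of_mem_cycleMatching_update {τ : Fin m → Fin 4} {i : Fin m} {e : Sym2 V}
    (he : e ∈ cycleMatching q (update τ i (τ i + 1))) :
    e ∈ cycleMatching q τ ∨ e = cycleEdge q i (τ i + 1) ∨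
      e = cycleEdge q i (τ i + 1 + 2) := by
  obtain ⟨j, hj⟩ := he
  rcases eq_or_ne j i with rfl | hji
  · rw [update_self] at hj
    exact Or.inr hj
  · exact Or.inl ⟨j, by rwa [update_of_ne hji] at hj⟩

variable (hq : Injective fun p : Fin m × Fin 4 => q p.1 p.2)
include hq

theorem eq_iff_of_injective {i i' : Fin m} {j j' : Fin 4} :
    q i j = q i' j' ↔ i = i' ∧ j = j' :=
  (hq.eq_iff (a := (i, j)) (b := (i', j'))).trans Prod.ext_iff

theorem mem_cycleEdge_iff {i i' : Fin m} {j j' : Fin 4} :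
    q i' j' ∈ cycleEdge q i j ↔ i' = i ∧ (j' = j ∨ j' = j + 1) := by
  rw [cycleEdge, Sym2.mem_iff, eq_iff_of_injective hq, eq_iff_of_injective hq]
  tauto

theorem cycleEdge_eq_iff {i i' : Fin m} {j j' : Fin 4} :
    cycleEdge q i j = cycleEdge q i' j' ↔ i = i' ∧ j = j' := by
  have h4 : ∀ a b : Fin 4, a = b + 1 → a + 1 = b → False := by decide
  rw [cycleEdge, cycleEdge, Sym2.eq_iff, eq_iff_of_injective hq, eq_iff_of_injective hq,
    eq_iff_of_injective hq, eq_iff_of_injective hq]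
  constructor
  · rintro (⟨h, -⟩ | ⟨⟨-, h1⟩, -, h2⟩)
    · exact h
    · exact (h4 _ _ h1 h2).elim
  · rintro ⟨rfl, rfl⟩
    exact Or.inl ⟨⟨rfl, rfl⟩, rfl, rfl⟩

theorem cycleEdge_not_isDiag (i : Fin m) (j : Fin 4) : ¬(cycleEdge q i j).IsDiag := by
  have h4 : ∀ a : Fin 4, a ≠ a + 1 := by decide
  rw [cycleEdge, Sym2.mk_isDiag_iff, eq_iff_of_injective hq]
  exact fun h => h4 j h.2

theorem cycleEdge_mem_cycleMatching_iff {τ : Fin m → Fin 4} {i : Fin m} {j : Fin 4} :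
    cycleEdge q i j ∈ cycleMatching q τ ↔ j = τ i ∨ j = τ i + 2 := by
  constructor
  · rintro ⟨i', h | h⟩ <;> obtain ⟨rfl, rfl⟩ := (cycleEdge_eq_iff hq).1 h
    exacts [Or.inl rfl, Or.inr rfl]
  · rintro (rfl | rfl)
    exacts [⟨i, Or.inl rfl⟩, ⟨i, Or.inr rfl⟩]

theorem ncard_incidence_cycleMatching (hsurj : Surjective fun p : Fin m × Fin 4 => q p.1 p.2)
    (τ : Fin m → Fin 4) (v : V) : {e ∈ cycleMatching q τ | v ∈ e}.ncard = 1 := by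
  obtain ⟨⟨i, j⟩, rfl⟩ := hsurj v
  have h4 : ∀ t j : Fin 4, ∃ k, ((k = t ∨ k = t + 2) ∧ (j = k ∨ j = k + 1)) ∧
      ∀ k', (k' = t ∨ k' = t + 2) ∧ (j = k' ∨ j = k' + 1) → k' = k := by decide
  obtain ⟨k, hk, huniq⟩ := h4 (τ i) j
  refine Set.ncard_eq_one.2 ⟨cycleEdge q i k, Set.ext fun e => ⟨?_, ?_⟩⟩
  · rintro ⟨⟨i', he | he⟩, hv⟩ <;> subst he <;>
      obtain ⟨rfl, hj⟩ := (mem_cycleEdge_iff hq).1 hv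
    · exact congrArg _ (huniq _ ⟨Or.inl rfl, hj⟩)
    · exact congrArg _ (huniq _ ⟨Or.inr rfl, hj⟩)
  · rintro rfl
    exact ⟨(cycleEdge_mem_cycleMatching_iff hq).2 hk.1,
      (mem_cycleEdge_iff hq).2 ⟨rfl, hk.2⟩⟩

theorem ncard_neighborSet_twoFactor (hsurj : Surjective fun p : Fin m × Fin 4 => q p.1 p.2)
    {F : Set (Sym2 V)} (hFdiag : ∀ e ∈ F, ¬e.IsDiag)
    (hforced : ∀ v, {e ∈ F | v ∈ e}.ncard = 1)
    (hFq : ∀ i j, cycleEdge q i j ∉ F) (τ : Fin m → Fin 4) (v : V) :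
    ((twoFactor q F τ).neighborSet v).ncard = 2 := by
  have hdiag : ∀ e ∈ F ∪ cycleMatching q τ, ¬e.IsDiag := by
    rintro e (he | ⟨i, rfl | rfl⟩)
    exacts [hFdiag e he, cycleEdge_not_isDiag hq _ _, cycleEdge_not_isDiag hq _ _]
  have hdisj : Disjoint {e ∈ F | v ∈ e} {e ∈ cycleMatching q τ | v ∈ e} := by
    refine Set.disjoint_left.2 ?_
    rintro e ⟨he, -⟩ ⟨⟨i, rfl | rfl⟩, -⟩
    exacts [hFq _ _ he, hFq _ _ he]
  have hsplit : {e ∈ F ∪ cycleMatching q τ | v ∈ e} =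
      {e ∈ F | v ∈ e} ∪ {e ∈ cycleMatching q τ | v ∈ e} := Set.sep_union
  have hF1 := hforced v
  have hM1 := ncard_incidence_cycleMatching hq hsurj τ v
  rw [twoFactor, ncard_neighborSet_fromEdgeSet hdiag, hsplit,
    Set.ncard_union_eq hdisj (Set.finite_of_ncard_ne_zero (hF1 ▸ one_ne_zero))
      (Set.finite_of_ncard_ne_zero (hM1 ▸ one_ne_zero)), hF1, hM1]

theorem union_cycleMatching_symmDiff_cycles {F : Set (Sym2 V)}
    (hFq : ∀ i j, cycleEdge q i j ∉ F) (σ : Fin m → Fin 4) (S : Set (Fin m)) :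
    symmDiff (F ∪ cycleMatching q σ) (⋃ i ∈ S, {e | ∃ j, e = cycleEdge q i j}) =
      F ∪ cycleMatching q (shiftOn σ S) := by
  ext e
  by_cases he : ∃ i j, e = cycleEdge q i j
  · obtain ⟨i, j, rfl⟩ := he
    have h4 : ∀ t j : Fin 4, (j = t + 1 ∨ j = t + 1 + 2) ↔ ¬(j = t ∨ j = t + 2) := by
      decide
    by_cases hi : i ∈ S
    · simp [Set.mem_symmDiff, cycleEdge_eq_iff hq, cycleEdge_mem_cycleMatching_iff hq, hFq, hi,
        shiftOn, h4]
    · simp [Set.mem_symmDiff, cycleEdge_eq_iff hq, cycleEdge_mem_cycleMatching_iff hq, hFq, hi,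
        shiftOn]
  · have hM : ∀ τ, e ∉ cycleMatching q τ := fun τ ⟨i, h⟩ => h.elim
      (fun h => he ⟨i, _, h⟩) fun h => he ⟨i, _, h⟩
    simp only [Set.mem_symmDiff, Set.mem_union, Set.mem_iUnion, hM, or_false]
    grind

variable [Finite V] {F : Set (Sym2 V)}

theorem reachable_twoFactor_update {τ : Fin m → Fin 4} {i : Fin m}
    (hcyc : (twoFactor q F τ).IsCycles)
    (hsep : ¬(twoFactor q F τ).Reachable (q i (τ i)) (q i (τ i + 2))) :
    (twoFactor q F (update τ i (τ i + 1))).Reachable =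
      (twoFactor q F τ ⊔ edge (q i (τ i)) (q i (τ i + 2))).Reachable := by
  have h4 : ∀ t : Fin 4, t + 1 + 1 = t + 2 ∧ t + 1 + 2 = t + 2 + 1 ∧ t + 2 + 1 + 1 = t ∧
      t + 2 + 1 ≠ t := by decide
  obtain ⟨e1, e2, e3, hne⟩ := h4 (τ i)
  refine reachable_eq_of_exchange (b := q i (τ i + 1)) (d := q i (τ i + 2 + 1)) ?_ ?_ ?_
    (hcyc.reachable_deleteEdges ?_) (hcyc.reachable_deleteEdges ?_) hsep
  · intro x y hxy
    obtain ⟨⟨hmem, hxy⟩, hnot⟩ := deleteEdges_adj.1 hxy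
    simp only [Set.mem_insert_iff, Set.mem_singleton_iff, not_or] at hnot
    refine (fromEdgeSet_adj _).2 ⟨?_, hxy⟩
    rcases hmem with hF | hM
    exacts [Or.inl hF, Or.inr (mem_cycleMatching_update hM hnot.1 hnot.2)]
  · intro x y hxy
    obtain ⟨hmem, hxy⟩ := (fromEdgeSet_adj _).1 hxy
    rcases hmem with hF | hM
    · exact Or.inl (Or.inl ((fromEdgeSet_adj _).2 ⟨Or.inl hF, hxy⟩))
    rcases mem_of_mem_cycleMatching_update hM with hM | he | he
    · exact Or.inl (Or.inl ((fromEdgeSet_adj _).2 ⟨Or.inr hM, hxy⟩))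
    · rw [cycleEdge, e1, Sym2.eq_iff] at he
      exact Or.inl (Or.inr ((edge_adj _ _ _ _).2 ⟨he, hxy⟩))
    · rw [cycleEdge, e2, e3, Sym2.eq_iff] at he
      exact Or.inr ((edge_adj _ _ _ _).2 ⟨he, hxy⟩)
  · refine (fromEdgeSet_adj _).2 ⟨Or.inr ⟨i, Or.inr ?_⟩, ?_⟩
    · rw [update_self, cycleEdge, e2, e3]
    · exact fun h => hne ((eq_iff_of_injective hq).1 h).2
  all_goals
    refine (fromEdgeSet_adj _).2 ⟨Or.inr ⟨i, ?_⟩, cycleEdge_not_isDiag hq _ _⟩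
    simp [cycleEdge]

theorem reachable_twoFactor_shiftOn (hcyc : ∀ τ, (twoFactor q F τ).IsCycles)
    {σ : Fin m → Fin 4} {S : Set (Fin m)}
    (hsep : ∀ T ⊆ S, ∀ i ∈ S, i ∉ T →
      ¬(twoFactor q F σ ⊔ fromEdgeSet (chord q σ '' T)).Reachable
        (q i (σ i)) (q i (σ i + 2))) :
    (twoFactor q F (shiftOn σ S)).Reachable =
      (twoFactor q F σ ⊔ fromEdgeSet (chord q σ '' S)).Reachable := by
  refine S.toFinite.induction_on_subset (motive := fun T _ =>
    (twoFactor q F (shiftOn σ T)).Reachable =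
      (twoFactor q F σ ⊔ fromEdgeSet (chord q σ '' T)).Reachable) S ?_ ?_
  · simp [shiftOn_empty]
  · intro i T hiS hTS hiT ih
    have hτi : shiftOn σ T i = σ i := shiftOn_of_notMem hiT
    rw [shiftOn_insert hiT, reachable_twoFactor_update hq (hcyc _)
      (by rw [hτi, ih]; exact hsep T hTS i hiS hiT), reachable_sup_congr ih, hτi,
      Set.image_insert_eq, Set.insert_eq, fromEdgeSet_union, sup_comm (fromEdgeSet _),
      sup_assoc]
    rfl

theorem connected_twoFactor_shiftOn (hcyc : ∀ τ, (twoFactor q F τ).IsCycles)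
    {σ : Fin m → Fin 4} {S : Set (Fin m)}
    (htree : (fromEdgeSet {e | ∃ i ∈ S,
      e = s((twoFactor q F σ).connectedComponentMk (q i (σ i)),
        (twoFactor q F σ).connectedComponentMk (q i (σ i + 2)))}).IsTree)
    (hcount : S.ncard = Nat.card (twoFactor q F σ).ConnectedComponent - 1) :
    (twoFactor q F (shiftOn σ S)).Connected := by
  set cm := (twoFactor q F σ).connectedComponentMk
  set ends : Fin m → Sym2 (twoFactor q F σ).ConnectedComponent :=
    fun i => s(cm (q i (σ i)), cm (q i (σ i + 2)))
  have htree' : (fromEdgeSet (ends '' S)).IsTree := by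
    have himg : ends '' S = {e | ∃ i ∈ S, e = ends i} := by
      ext e
      simp [eq_comm]
    rwa [himg]
  have hchord : ∀ T, Sym2.map cm '' (chord q σ '' T) = ends '' T := fun T => by
    rw [Set.image_image]
    rfl
  have hreach := reachable_twoFactor_shiftOn hq hcyc fun T hTS i hiS hiT => by
    rw [reachable_sup_fromEdgeSet_iff, hchord]
    exact htree'.not_reachable_of_ncard_eq S.toFinite hcount hTS hiS hiT
  obtain ⟨c⟩ := htree'.connected.nonempty
  refine (connected_iff _).2 ⟨fun u w => ?_, ⟨c.exists_rep.choose⟩⟩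
  rw [hreach, reachable_sup_fromEdgeSet_iff, hchord]
  exact htree'.connected.preconnected _ _

end FourCycles

open FourCycles

theorem stmt_18_general {V : Type*} [Fintype V] [DecidableEq V] (G : SimpleGraph V)
    (F : Set (Sym2 V)) (hF : F ⊆ G.edgeSet)
    (m : ℕ) (q : Fin m → Fin 4 → V)
    (hbij : Function.Bijective fun p : Fin m × Fin 4 => q p.1 p.2)
    (hunforced : ∀ e : Sym2 V,
      e ∈ G.edgeSet \ F ↔ ∃ i j, e = s(q i j, q i (j + 1)))
    (hforced : ∀ v : V, {e ∈ F | v ∈ e}.ncard = 1)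
    (σ : Fin m → Fin 4)
    (H : Set (Sym2 V))
    (hH : H = {e : Sym2 V | ∃ i, e = s(q i (σ i), q i (σ i + 1)) ∨
        e = s(q i (σ i + 2), q i (σ i + 3))})
    (K : SimpleGraph V) (hK : K = SimpleGraph.fromEdgeSet (F ∪ H))
    (S : Set (Fin m))
    -- `S` indexes a spanning tree of the component graph `G'` of `F ∪ H`:
    (htree : (SimpleGraph.fromEdgeSet {e : Sym2 K.ConnectedComponent | ∃ i ∈ S,
        e = s(K.connectedComponentMk (q i (σ i)),
              K.connectedComponentMk (q i (σ i + 2)))}).IsTree)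
    (hcount : S.ncard = Nat.card K.ConnectedComponent - 1) :
    IsHamCycleSet G
      (symmDiff (F ∪ H)
        (⋃ i ∈ S, {e : Sym2 V | ∃ j, e = s(q i j, q i (j + 1))})) := by
  have hcycG : ∀ i j, cycleEdge q i j ∈ G.edgeSet \ F := fun i j =>
    (hunforced _).2 ⟨i, j, rfl⟩
  obtain rfl : H = cycleMatching q σ := by
    have h3 : ∀ t : Fin 4, t + 2 + 1 = t + 3 := by decide
    simp only [hH, cycleMatching, cycleEdge, h3]
  obtain rfl : K = twoFactor q F σ := hK
  have hsub : ∀ τ, F ∪ cycleMatching q τ ⊆ G.edgeSet := fun τ =>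
    Set.union_subset hF (by rintro e ⟨i, rfl | rfl⟩ <;> exact (hcycG _ _).1)
  have hdeg : ∀ τ v, ((twoFactor q F τ).neighborSet v).ncard = 2 :=
    ncard_neighborSet_twoFactor hbij.1 hbij.2 (fun e he => G.not_isDiag_of_mem_edgeSet (hF he))
      hforced fun i j => (hcycG i j).2
  have hcyc : ∀ τ, (twoFactor q F τ).IsCycles := fun τ v _ => hdeg τ v
  have hconn := connected_twoFactor_shiftOn hbij.1 hcyc htree hcount
  obtain ⟨v⟩ := hconn.nonempty
  have hv : ((twoFactor q F (shiftOn σ S)).neighborSet v).Nonempty :=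
    Set.nonempty_of_ncard_ne_zero (by rw [hdeg]; norm_num)
  obtain ⟨p, hp, hedges⟩ := (hcyc _).exists_isHamiltonianCycle
    ((fromEdgeSet_le _).2 (Set.sdiff_subset.trans (hsub _))) hconn hv
  refine ⟨v, p, hp, ?_⟩
  rw [hedges, edgeSet_fromEdgeSet, sdiff_eq_left.2 ?_]
  · exact union_cycleMatching_symmDiff_cycles hbij.1 (fun i j => (hcycG i j).2) σ S
  · exact Set.disjoint_left.2 fun e he => G.not_isDiag_of_mem_edgeSet (hsub _ he)

/-- In the minimum-spanning-tree setting (max degree 3, unforced edges forming vertex-disjoint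
4-cycles `C_i` covering all vertices, each vertex on exactly one forced edge, and `H_i` a chosen
opposite pair of each `C_i`): if `S` indexes a spanning tree of the component graph `G'` of
`F ∪ H`, then the symmetric difference of `F ∪ H` with the union of the 4-cycles `C_i`, `i ∈ S`,
is a Hamiltonian cycle of `G`. -/
theorem stmt_18 {V : Type*} [Fintype V] [DecidableEq V] (G : SimpleGraph V)
    (hdeg : ∀ v : V, (G.neighborSet v).ncard ≤ 3)
    (F : Set (Sym2 V)) (hF : F ⊆ G.edgeSet)
    (m : ℕ) (q : Fin m → Fin 4 → V)
    (hbij : Function.Bijective fun p : Fin m × Fin 4 => q p.1 p.2)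
    (hadj : ∀ i j, G.Adj (q i j) (q i (j + 1)))
    (hunforced : ∀ e : Sym2 V,
      e ∈ G.edgeSet \ F ↔ ∃ i j, e = s(q i j, q i (j + 1)))
    (hforced : ∀ v : V, {e ∈ F | v ∈ e}.ncard = 1)
    (σ : Fin m → Fin 4)
    (H : Set (Sym2 V))
    (hH : H = {e : Sym2 V | ∃ i, e = s(q i (σ i), q i (σ i + 1)) ∨
        e = s(q i (σ i + 2), q i (σ i + 3))})
    (K : SimpleGraph V) (hK : K = SimpleGraph.fromEdgeSet (F ∪ H))
    (S : Set (Fin m))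
    -- `S` indexes a spanning tree of the component graph `G'` of `F ∪ H`:
    (htree : (SimpleGraph.fromEdgeSet {e : Sym2 K.ConnectedComponent | ∃ i ∈ S,
        e = s(K.connectedComponentMk (q i (σ i)),
              K.connectedComponentMk (q i (σ i + 2)))}).IsTree)
    (hcount : S.ncard = Nat.card K.ConnectedComponent - 1) :
    IsHamCycleSet G
      (symmDiff (F ∪ H)
        (⋃ i ∈ S, {e : Sym2 V | ∃ j, e = s(q i j, q i (j + 1))})) :=
  stmt_18_general G F hF m q hbij hunforced hforced σ H hH K hK S htree hcount
end
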